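/- For all integers N ≥ 1, r ≥ 1 and n ≥ 1, B^{(r)}_{N,n} = n! · ∑_{t_1 + 2t_2 + ⋯ + n t_n = n} ( (t_1+⋯+t_n)! / (t_1! ⋯ t_n!) ) · (−1)^{t_1+⋯+t_n} · M_r(1)^{t_1} M_r(2)^{t_2} ⋯ M_r(n)^{t_n}, where the sum is over all n-tuples (t_1,…,t_n) of nonnegative integers with t_1 + 2t_2 + ⋯ + n t_n = n. -/

import Mathlib

/-!
Put `g = (hgSeries N) ^ r`: its constant term is `1` and its coefficients are `M N r e`.
Modulo `X ^ (n + 1)` one has `g⁻¹ ≡ ∑_{k ≤ n} (1 - g) ^ k` and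
`1 - g ≡ -∑_{e=1}^{n} M N r e • X ^ e`, so the multinomial theorem expands the `n`-th
coefficient of `g⁻¹` as a sum over the tuples `(t₁, …, tₙ)` with `∑ e • tₑ = n`, each
contributing its multinomial coefficient times `∏ (-M N r e) ^ tₑ`.
-/

/-- The power series ∑_{i≥0} (N!/(N+i)!) xⁱ over ℚ. -/
noncomputable def hgSeries (N : ℕ) : PowerSeries ℚ :=
  PowerSeries.mk fun i => (N.factorial : ℚ) / ((N + i).factorial : ℚ)

/-- The higher order hypergeometric Bernoulli number `B^{(r)}_{N,n}`, defined so that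
`∑ (B^{(r)}_{N,n}/n!) xⁿ` is the r-th power of the multiplicative inverse of
`hgSeries N` in ℚ[[x]]. -/
noncomputable def hBr (N r n : ℕ) : ℚ :=
  (n.factorial : ℚ) * PowerSeries.coeff (R := ℚ) n ((hgSeries N)⁻¹ ^ r)

/-- `M_r(e) = ∑_{i₁+⋯+i_r=e} (N!)^r / ((N+i₁)! ⋯ (N+i_r)!)`. -/
noncomputable def M (N r e : ℕ) : ℚ :=
  ∑ i ∈ Finset.Nat.antidiagonalTuple r e,
    (N.factorial : ℚ) ^ r / ∏ j, ((N + i j).factorial : ℚ)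

open Finset PowerSeries

theorem Nat.cast_multinomial_eq_div {α K : Type*} [Semifield K] [CharZero K]
    (s : Finset α) (f : α → ℕ) :
    (Nat.multinomial s f : K) =
      ((∑ i ∈ s, f i).factorial : K) / ∏ i ∈ s, ((f i).factorial : K) := by
  have hprod : ∏ i ∈ s, ((f i).factorial : K) ≠ 0 :=
    prod_ne_zero_iff.mpr fun i _ => Nat.cast_ne_zero.mpr (Nat.factorial_ne_zero _)
  rw [eq_div_iff hprod, ← Nat.multinomial_spec s f]
  push_cast
  ring

theorem sum_le_sum_succ_mul {n : ℕ} (t : Fin n → ℕ) :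
    ∑ j, t j ≤ ∑ j : Fin n, ((j : ℕ) + 1) * t j :=
  sum_le_sum fun _ _ => Nat.le_mul_of_pos_left _ (Nat.succ_pos _)

/-- A tuple of multiplicities of total weight `n` has at most `n` parts, so its entries
fit in `Fin (n + 1)`. -/
theorem sum_range_sum_piAntidiag_filter_weight {A : Type*} [AddCommMonoid A] (n : ℕ)
    (F : (Fin n → ℕ) → A) :
    ∑ k ∈ range (n + 1), ∑ t ∈ (piAntidiag univ k).filter
        (fun t : Fin n → ℕ => ∑ j : Fin n, ((j : ℕ) + 1) * t j = n), F t =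
      ∑ t ∈ univ.filter (fun t : Fin n → Fin (n + 1) =>
          ∑ j : Fin n, ((j : ℕ) + 1) * (t j : ℕ) = n), F (fun j => t j) := by
  rw [sum_sigma']
  symm
  refine sum_bij (fun t _ => ⟨∑ j, (t j : ℕ), fun j => t j⟩) ?_ ?_ ?_ (fun _ _ => rfl)
  · intro t ht
    rw [mem_filter] at ht
    have := sum_le_sum_succ_mul fun j => (t j : ℕ)
    simp only [mem_sigma, mem_range, mem_filter, mem_piAntidiag]
    exact ⟨by omega, by simp, ht.2⟩
  · intro t _ t' _ h
    funext j
    exact Fin.ext (congr_fun (eq_of_heq (Sigma.mk.inj h).2) j)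
  · rintro ⟨k, t⟩ ht
    simp only [mem_sigma, mem_filter, mem_piAntidiag] at ht
    obtain ⟨-, ⟨rfl, -⟩, hweight⟩ := ht
    have hle (j : Fin n) : t j ≤ n := by
      have := single_le_sum (f := t) (fun _ _ => Nat.zero_le _) (mem_univ j)
      have := sum_le_sum_succ_mul t
      omega
    exact ⟨fun j => ⟨t j, Nat.lt_succ_of_le (hle j)⟩, by simpa using hweight, rfl⟩

namespace PowerSeries

section CommSemiring

variable {R : Type*} [CommSemiring R]

theorem coeff_pow_eq_sum_antidiagonalTuple (k n : ℕ) (φ : R⟦X⟧) :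
    coeff n (φ ^ k) = ∑ l ∈ Nat.antidiagonalTuple k n, ∏ i, coeff (l i) φ := by
  classical
  rw [← Fin.prod_const, coeff_prod]
  refine sum_equiv Finsupp.equivFunOnFinite (fun l => ?_) (fun _ _ => rfl)
  simp [mem_finsuppAntidiag, Nat.mem_antidiagonalTuple]

theorem coeff_pow_sum_C_mul_X_pow {ι : Type*} [Fintype ι] [DecidableEq ι] (c : ι → R)
    (w : ι → ℕ) (k m : ℕ) :
    coeff m ((∑ i, C (c i) * X ^ w i) ^ k) =
      ∑ t ∈ (piAntidiag univ k).filter (fun t => ∑ i, w i * t i = m),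
        (Nat.multinomial univ t : R) * ∏ i, c i ^ t i := by
  rw [sum_pow_eq_sum_piAntidiag, map_sum, sum_filter]
  refine sum_congr rfl fun t _ => ?_
  have hmonomial : ∏ i, (C (c i) * X ^ w i) ^ t i = C (∏ i, c i ^ t i) * X ^ ∑ i, w i * t i := by
    simp_rw [mul_pow, ← map_pow, ← pow_mul, prod_mul_distrib, ← map_prod, prod_pow_eq_pow_sum]
  rw [hmonomial, ← map_natCast C, ← mul_assoc, ← map_mul, coeff_C_mul_X_pow]
  simp only [eq_comm]

end CommSemiring

section CommRing

variable {R : Type*} [CommRing R]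

theorem coeff_eq_of_X_pow_dvd_sub {n : ℕ} {φ ψ : R⟦X⟧} (h : X ^ (n + 1) ∣ φ - ψ) :
    coeff n φ = coeff n ψ := by
  rw [← sub_eq_zero, ← map_sub]
  exact X_pow_dvd_iff.mp h n n.lt_succ_self

theorem X_pow_dvd_sub_sum_geom {φ ψ : R⟦X⟧} (hψφ : ψ * φ = 1) (hφ : constantCoeff φ = 1)
    (n : ℕ) : X ^ (n + 1) ∣ ψ - ∑ k ∈ range (n + 1), (1 - φ) ^ k := by
  have hX : X ∣ 1 - φ := by simp [X_dvd_iff, hφ]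
  have hgeom : ψ - ∑ k ∈ range (n + 1), (1 - φ) ^ k = ψ * (1 - φ) ^ (n + 1) := by
    linear_combination
      (∑ k ∈ range (n + 1), (1 - φ) ^ k) * hψφ - ψ * mul_neg_geom_sum (1 - φ) (n + 1)
  rw [hgeom]
  exact dvd_mul_of_dvd_right (pow_dvd_pow_of_dvd hX _) ψ

theorem X_pow_succ_dvd_sub_sum_fin {φ : R⟦X⟧} (hφ : constantCoeff φ = 0) (n : ℕ) :
    X ^ (n + 1) ∣ φ - ∑ j : Fin n, C (coeff (j + 1) φ) * X ^ ((j : ℕ) + 1) := by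
  refine X_pow_dvd_iff.mpr fun m hm => ?_
  rw [map_sub, sub_eq_zero, map_sum]
  simp_rw [coeff_C_mul_X_pow]
  cases m with
  | zero => simp [hφ]
  | succ k =>
    rw [sum_eq_single ⟨k, by omega⟩ (fun j _ hj => if_neg fun h => hj (Fin.ext (by simp; omega)))
      (by simp)]
    simp

end CommRing

end PowerSeries

theorem constantCoeff_hgSeries (N : ℕ) : constantCoeff (hgSeries N) = 1 := by
  rw [← coeff_zero_eq_constantCoeff_apply, hgSeries, coeff_mk, add_zero,
    div_self (by positivity)]

theorem coeff_hgSeries_pow (N r e : ℕ) : coeff e (hgSeries N ^ r) = M N r e := by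
  simp only [coeff_pow_eq_sum_antidiagonalTuple, hgSeries, coeff_mk, M, prod_div_distrib,
    prod_const, card_univ, Fintype.card_fin]

theorem stmt14_general (N r n : ℕ) :
    hBr N r n = (n.factorial : ℚ) *
      ∑ t ∈ Finset.univ.filter (fun t : Fin n → Fin (n + 1) =>
          ∑ j : Fin n, ((j : ℕ) + 1) * (t j : ℕ) = n),
        ((∑ j : Fin n, (t j : ℕ)).factorial : ℚ) / (∏ j : Fin n, ((t j : ℕ).factorial : ℚ)) *
          (-1 : ℚ) ^ (∑ j : Fin n, (t j : ℕ)) *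
          ∏ j : Fin n, (M N r ((j : ℕ) + 1)) ^ (t j : ℕ) := by
  set g := hgSeries N ^ r
  set q : ℚ⟦X⟧ := ∑ j : Fin n, C (-M N r (j + 1)) * X ^ ((j : ℕ) + 1)
  have hg : constantCoeff g = 1 := by simp [g, constantCoeff_hgSeries]
  have hinv : (hgSeries N)⁻¹ ^ r * g = 1 := by
    rw [← mul_pow, PowerSeries.inv_mul_cancel _ (by simp [constantCoeff_hgSeries]), one_pow]
  have hq : X ^ (n + 1) ∣ (1 - g) - q := by
    convert X_pow_succ_dvd_sub_sum_fin (φ := 1 - g) (by simp [hg]) n using 6 with j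
    simp [g, coeff_hgSeries_pow, coeff_one]
  have hqk : X ^ (n + 1) ∣ ∑ k ∈ range (n + 1), (1 - g) ^ k - ∑ k ∈ range (n + 1), q ^ k := by
    rw [← sum_sub_distrib]
    exact dvd_sum fun k _ => hq.trans (sub_dvd_pow_sub_pow _ _ k)
  have hdvd : X ^ (n + 1) ∣ (hgSeries N)⁻¹ ^ r - ∑ k ∈ range (n + 1), q ^ k := by
    simpa only [sub_add_sub_cancel] using dvd_add (X_pow_dvd_sub_sum_geom hinv hg n) hqk
  rw [hBr, coeff_eq_of_X_pow_dvd_sub hdvd, map_sum]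
  simp_rw [q, coeff_pow_sum_C_mul_X_pow]
  rw [sum_range_sum_piAntidiag_filter_weight]
  refine congr_arg _ (sum_congr rfl fun t _ => ?_)
  have hsign : ∏ j : Fin n, (-M N r (j + 1)) ^ (t j : ℕ) =
      (-1) ^ (∑ j, (t j : ℕ)) * ∏ j : Fin n, M N r (j + 1) ^ (t j : ℕ) := by
    rw [← prod_pow_eq_pow_sum, ← prod_mul_distrib]
    exact prod_congr rfl fun j _ => neg_pow _ _
  rw [Nat.cast_multinomial_eq_div, hsign, mul_assoc]

/-- Trudi-type expression for `B^{(r)}_{N,n}`.  An n-tuple `(t₁,…,t_n)` with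
`t₁ + 2t₂ + ⋯ + n·t_n = n` is encoded as `t : Fin n → Fin (n+1)` (each `t_j ≤ n`
automatically since `j·t_j ≤ n`), with `t j` the multiplicity of `j+1`. -/
theorem stmt14 (N r n : ℕ) (hN : 1 ≤ N) (hr : 1 ≤ r) (hn : 1 ≤ n) :
    hBr N r n = (n.factorial : ℚ) *
      ∑ t ∈ Finset.univ.filter (fun t : Fin n → Fin (n + 1) =>
          ∑ j : Fin n, ((j : ℕ) + 1) * (t j : ℕ) = n),
        ((∑ j : Fin n, (t j : ℕ)).factorial : ℚ) / (∏ j : Fin n, ((t j : ℕ).factorial : ℚ)) *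
          (-1 : ℚ) ^ (∑ j : Fin n, (t j : ℕ)) *
          ∏ j : Fin n, (M N r ((j : ℕ) + 1)) ^ (t j : ℕ) :=
  stmt14_general N r n
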